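/- For every D ∈ J = ℂ³, the linear map ψ(D) on the 3-qubit Freudenthal triple system F preserves the quartic form: q(ψ(D)x) = q(x) for all x ∈ F. -/
import Mathlib

/-- The 3-qubit cubic Jordan algebra `J = ℂ ⊕ ℂ ⊕ ℂ`. -/
abbrev JABC : Type := ℂ × ℂ × ℂ

/-- Cubic norm `N(A) = A₁A₂A₃`. -/
def cubicN (A : JABC) : ℂ := A.1 * A.2.1 * A.2.2

/-- Trace bilinear form `Tr(A,B) = A₁B₁ + A₂B₂ + A₃B₃`. -/
def trJ (A B : JABC) : ℂ := A.1 * B.1 + A.2.1 * B.2.1 + A.2.2 * B.2.2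

/-- Quadratic adjoint `A♯ = (A₂A₃, A₃A₁, A₁A₂)`. -/
def sharpJ (A : JABC) : JABC := (A.2.1 * A.2.2, A.2.2 * A.1, A.1 * A.2.1)

/-- Cross product `A × C = (A+C)♯ − A♯ − C♯`. -/
def crossJ (A C : JABC) : JABC := sharpJ (A + C) - sharpJ A - sharpJ C

/-- The 3-qubit Freudenthal triple system `F = ℂ ⊕ ℂ ⊕ J ⊕ J`, with elements `(α, β, A, B)`. -/
abbrev FABC : Type := ℂ × ℂ × JABC × JABC

/-- The quartic form of the FTS. -/
def quarticQ (x : FABC) : ℂ :=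
  -2 * (x.1 * x.2.1 - trJ x.2.2.1 x.2.2.2) ^ 2 -
    8 * (x.1 * cubicN x.2.2.1 + x.2.1 * cubicN x.2.2.2 -
      trJ (sharpJ x.2.2.1) (sharpJ x.2.2.2))

/-- The antisymmetric bilinear form `{x,y}` of the FTS. -/
def bilinF (x y : FABC) : ℂ :=
  x.1 * y.2.1 - x.2.1 * y.1 + trJ x.2.2.1 y.2.2.2 - trJ x.2.2.2 y.2.2.1

/-- The transformation `φ(C)` of the FTS. -/
def phiF (C : JABC) (x : FABC) : FABC :=
  (x.1 + trJ x.2.2.2 C + trJ x.2.2.1 (sharpJ C) + x.2.1 * cubicN C,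
   x.2.1,
   x.2.2.1 + x.2.1 • C,
   x.2.2.2 + crossJ x.2.2.1 C + x.2.1 • sharpJ C)

/-- The transformation `ψ(D)` of the FTS. -/
def psiF (D : JABC) (x : FABC) : FABC :=
  (x.1,
   x.2.1 + trJ x.2.2.1 D + trJ x.2.2.2 (sharpJ D) + x.1 * cubicN D,
   x.2.2.1 + crossJ x.2.2.2 D + x.1 • sharpJ D,
   x.2.2.2 + x.1 • D)

/-- `ψ(D)` preserves the quartic form: `q(ψ(D)x) = q(x)` for all `x ∈ F`. -/
theorem psi_preserves_quartic :
    ∀ (D : JABC) (x : FABC), quarticQ (psiF D x) = quarticQ x := by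
  rintro ⟨d1, d2, d3⟩ ⟨a, b, ⟨A1, A2, A3⟩, ⟨B1, B2, B3⟩⟩
  simp only [quarticQ, psiF, trJ, cubicN, sharpJ, crossJ, Prod.mk_add_mk, Prod.smul_mk,
    Prod.fst_add, Prod.snd_add, Prod.mk_sub_mk, smul_eq_mul]
  ring
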